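/- Let 1 < α < 2, λ ≥ 0, h > 0, and let γ₁ = α/2 + γ₃, γ₂ = (2-α)/2 - 2γ₃ for a real parameter γ₃. Define g_0 = γ₁ ω_0^α e^{hλ}, g_1 = γ₁ ω_1^α + γ₂ ω_0^α, and g_k = (γ₁ ω_k^α + γ₂ ω_{k-1}^α + γ₃ ω_{k-2}^α) e^{-(k-1)hλ} for k ≥ 2. Then the series ∑_{k=0}^∞ g_k converges to φ(λ) = (γ₁ e^{hλ} + γ₂ + γ₃ e^{-hλ})(1 - e^{-hλ})^α. -/

import Mathlib

noncomputable def genBinom (α : ℝ) (k : ℕ) : ℝ :=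
  (∏ i ∈ Finset.range k, (α - i)) / (Nat.factorial k)

noncomputable def omegaCoeff (α : ℝ) (k : ℕ) : ℝ := (-1 : ℝ) ^ k * genBinom α k

noncomputable def gCoeff (α lam h γ₁ γ₂ γ₃ : ℝ) (k : ℕ) : ℝ :=
  if k = 0 then γ₁ * omegaCoeff α 0 * Real.exp (h * lam)
  else if k = 1 then γ₁ * omegaCoeff α 1 + γ₂ * omegaCoeff α 0
  else (γ₁ * omegaCoeff α k + γ₂ * omegaCoeff α (k - 1) + γ₃ * omegaCoeff α (k - 2)) *
      Real.exp (-((k : ℝ) - 1) * h * lam)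

noncomputable def phiFun (α lam h γ₁ γ₂ γ₃ : ℝ) : ℝ :=
  (γ₁ * Real.exp (h * lam) + γ₂ + γ₃ * Real.exp (-(h * lam))) *
    (1 - Real.exp (-(h * lam))) ^ α

/-!
For `|x| < 1`, `∑ ω_k^α x^k = (1 - x)^α` is the binomial series. For `0 ≤ α ≤ 1` every `ω_k^α`
with `k ≥ 1` is `≤ 0` while the partial sums `∑_{k ≤ n} ω_k^α = ω_n^{α-1}` are `≥ 0`, so the
coefficients are absolutely summable; `ω_{n+1}^α = -α/(n+1) ω_n^{α-1}` carries this to all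
`α ≥ 0`. Hence the identity extends by continuity to `|x| ≤ 1`, in particular to `x = e^{-hλ}`.
With this `x`, the series `∑ g_k` is `γ₁ e^{hλ} ∑ ω_k x^k` plus `γ₂ ∑ ω_k x^k` shifted by one
place plus `γ₃ x ∑ ω_k x^k` shifted by two places.
-/

open Finset

theorem omegaCoeff_zero (α : ℝ) : omegaCoeff α 0 = 1 := by
  simp [omegaCoeff, genBinom]

theorem omegaCoeff_succ (α : ℝ) (n : ℕ) :
    omegaCoeff α (n + 1) = (n - α) / (n + 1) * omegaCoeff α n := by
  have : (n.factorial : ℝ) ≠ 0 := by positivity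
  simp only [omegaCoeff, genBinom, prod_range_succ, Nat.factorial_succ, pow_succ]
  push_cast
  field_simp
  ring

theorem omegaCoeff_succ_eq_sub_one (α : ℝ) (n : ℕ) :
    omegaCoeff α (n + 1) = -(α / (n + 1)) * omegaCoeff (α - 1) n := by
  have : (n.factorial : ℝ) ≠ 0 := by positivity
  have hprod : ∏ i ∈ range (n + 1), (α - i) = (∏ i ∈ range n, (α - 1 - i)) * α := by
    rw [prod_range_succ']
    congr 1
    · exact prod_congr rfl fun i _ => by push_cast; ring
    · simp
  simp only [omegaCoeff, genBinom, hprod, Nat.factorial_succ, pow_succ]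
  push_cast
  field_simp

theorem sum_range_succ_omegaCoeff (α : ℝ) (n : ℕ) :
    ∑ k ∈ range (n + 1), omegaCoeff α k = omegaCoeff (α - 1) n := by
  induction n with
  | zero => simp [omegaCoeff_zero]
  | succ n ih =>
    rw [sum_range_succ, ih, omegaCoeff_succ_eq_sub_one, omegaCoeff_succ]
    field_simp
    ring

theorem omegaCoeff_nonneg {α : ℝ} (hα : α ≤ 0) (n : ℕ) : 0 ≤ omegaCoeff α n := by
  induction n with
  | zero => simp [omegaCoeff_zero]
  | succ n ih =>
    rw [omegaCoeff_succ]
    exact mul_nonneg (div_nonneg (by linarith [n.cast_nonneg (α := ℝ)]) (by positivity)) ih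

theorem abs_omegaCoeff_succ_le {α : ℝ} (hα : 0 ≤ α) (n : ℕ) :
    |omegaCoeff α (n + 1)| ≤ α * |omegaCoeff (α - 1) n| := by
  rw [omegaCoeff_succ_eq_sub_one, abs_mul, abs_neg, abs_of_nonneg (by positivity)]
  gcongr
  exact div_le_self hα (by linarith [n.cast_nonneg (α := ℝ)])

theorem summable_abs_omegaCoeff_of_le_one {α : ℝ} (h0 : 0 ≤ α) (h1 : α ≤ 1) :
    Summable fun k => |omegaCoeff α k| := by
  have hnonpos (n : ℕ) : omegaCoeff α (n + 1) ≤ 0 := by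
    rw [omegaCoeff_succ_eq_sub_one]
    exact mul_nonpos_of_nonpos_of_nonneg (neg_nonpos.2 (by positivity))
      (omegaCoeff_nonneg (by linarith) n)
  refine summable_of_sum_range_le (c := 2) (fun _ => abs_nonneg _) fun n => ?_
  cases n with
  | zero => simp
  | succ n =>
    have habs : ∑ k ∈ range (n + 1), |omegaCoeff α k| =
        2 - ∑ k ∈ range (n + 1), omegaCoeff α k := by
      simp only [sum_range_succ' _ n, abs_of_nonpos (hnonpos _), sum_neg_distrib,
        omegaCoeff_zero, abs_one]
      ring
    rw [habs, sum_range_succ_omegaCoeff]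
    linarith [omegaCoeff_nonneg (by linarith : α - 1 ≤ 0) n]

theorem summable_abs_omegaCoeff {α : ℝ} (hα : 0 ≤ α) : Summable fun k => |omegaCoeff α k| := by
  obtain ⟨n, hn⟩ : ∃ n : ℕ, α ≤ n + 1 := ⟨⌈α⌉₊, by linarith [Nat.le_ceil α]⟩
  induction n generalizing α with
  | zero => exact summable_abs_omegaCoeff_of_le_one hα (by simpa using hn)
  | succ n ih =>
    rcases le_total α 1 with h1 | h1
    · exact summable_abs_omegaCoeff_of_le_one hα h1
    · have hprev := ih (α := α - 1) (by linarith) (by push_cast at hn; linarith)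
      rw [← summable_nat_add_iff 1]
      exact (hprev.mul_left α).of_nonneg_of_le (fun _ => abs_nonneg _)
        (abs_omegaCoeff_succ_le hα)

theorem genBinom_eq_choose (α : ℝ) (k : ℕ) : genBinom α k = Ring.choose α k := by
  rw [Ring.choose_eq_smul, genBinom, ← Polynomial.aeval_eq_smeval,
    ← descPochhammer_eval_eq_prod_range, smul_eq_mul, inv_mul_eq_div,
    ← descPochhammer_map (algebraMap ℤ ℝ), Polynomial.eval_map_algebraMap]

theorem hasSum_omegaCoeff_mul_pow (α : ℝ) {x : ℝ} (hx : |x| < 1) :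
    HasSum (fun k => omegaCoeff α k * x ^ k) ((1 - x) ^ α) := by
  have hmem : -x ∈ Metric.eball (0 : ℝ) 1 := by simpa [← ofReal_norm] using hx
  have hcoeff (k : ℕ) : omegaCoeff α k * x ^ k = Ring.choose α k * (-x) ^ k := by
    rw [omegaCoeff, genBinom_eq_choose, neg_pow]
    ring
  simpa [hcoeff, binomialSeries, mul_comm, ← sub_eq_add_neg] using
    (Real.one_add_rpow_hasFPowerSeriesOnBall_zero (a := α)).hasSum hmem

theorem hasSum_omegaCoeff_mul_pow_of_abs_le {α : ℝ} (hα : 0 ≤ α) {x : ℝ} (hx : |x| ≤ 1) :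
    HasSum (fun k => omegaCoeff α k * x ^ k) ((1 - x) ^ α) := by
  have hsum := summable_abs_omegaCoeff hα
  have hbound (k : ℕ) (y : ℝ) (hy : y ∈ Set.Icc (-1 : ℝ) 1) :
      ‖omegaCoeff α k * y ^ k‖ ≤ |omegaCoeff α k| := by
    rw [Real.norm_eq_abs, abs_mul, abs_pow]
    exact mul_le_of_le_one_right (abs_nonneg _) (pow_le_one₀ (abs_nonneg y) (abs_le.2 hy))
  have heq : Set.EqOn (fun y => ∑' k, omegaCoeff α k * y ^ k) (fun y => (1 - y) ^ α)
      (Set.Icc (-1) 1) :=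
    Set.EqOn.of_subset_closure (s := Set.Ioo (-1) 1)
      (fun y hy => (hasSum_omegaCoeff_mul_pow α (abs_lt.2 hy)).tsum_eq)
      (continuousOn_tsum (fun k => by fun_prop) hsum hbound)
      ((Real.continuous_rpow_const hα).comp (continuous_sub_left 1)).continuousOn
      Set.Ioo_subset_Icc_self (by rw [closure_Ioo (by norm_num)])
  rw [← show ∑' k, omegaCoeff α k * x ^ k = (1 - x) ^ α from heq (abs_le.1 hx)]
  exact (Summable.of_norm_bounded hsum fun k => hbound k x (abs_le.1 hx)).hasSum

theorem gCoeff_add_two (α lam h γ₁ γ₂ γ₃ : ℝ) (n : ℕ) :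
    gCoeff α lam h γ₁ γ₂ γ₃ (n + 2) =
      γ₁ * Real.exp (h * lam) * (omegaCoeff α (n + 2) * Real.exp (-(h * lam)) ^ (n + 2)) +
      γ₂ * (omegaCoeff α (n + 1) * Real.exp (-(h * lam)) ^ (n + 1)) +
      γ₃ * Real.exp (-(h * lam)) * (omegaCoeff α n * Real.exp (-(h * lam)) ^ n) := by
  have hexp : Real.exp (-((n + 2 : ℕ) - 1 : ℝ) * h * lam) = Real.exp (-(h * lam)) ^ (n + 1) := by
    rw [← Real.exp_nat_mul]
    push_cast
    ring_nf
  have hinv : Real.exp (h * lam) * Real.exp (-(h * lam)) = 1 := by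
    rw [← Real.exp_add, add_neg_cancel, Real.exp_zero]
  rw [gCoeff, if_neg (by omega), if_neg (by omega), show n + 2 - 1 = n + 1 by omega,
    Nat.add_sub_cancel, hexp]
  linear_combination -(γ₁ * omegaCoeff α (n + 2) * Real.exp (-(h * lam)) ^ (n + 1)) * hinv

theorem stmt5_general (α lam h γ₃ : ℝ) (hα1 : 1 < α) (hlam : 0 ≤ lam) (hh : 0 < h)
    (γ₁ γ₂ : ℝ) :
    HasSum (fun k : ℕ => gCoeff α lam h γ₁ γ₂ γ₃ k) (phiFun α lam h γ₁ γ₂ γ₃) := by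
  set x := Real.exp (-(h * lam)) with hx_def
  have hx : |x| ≤ 1 := by
    rw [abs_of_pos (Real.exp_pos _)]
    exact Real.exp_le_one_iff.2 (by nlinarith)
  have hinv : Real.exp (h * lam) * x = 1 := by
    rw [← Real.exp_add, add_neg_cancel, Real.exp_zero]
  have ht := hasSum_omegaCoeff_mul_pow_of_abs_le (α := α) (by linarith) hx
  have hval : phiFun α lam h γ₁ γ₂ γ₃ - ∑ i ∈ range 2, gCoeff α lam h γ₁ γ₂ γ₃ i =
      γ₁ * Real.exp (h * lam) * ((1 - x) ^ α - ∑ i ∈ range 2, omegaCoeff α i * x ^ i) +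
        γ₂ * ((1 - x) ^ α - ∑ i ∈ range 1, omegaCoeff α i * x ^ i) + γ₃ * x * (1 - x) ^ α := by
    simp only [phiFun, ← hx_def, gCoeff, omegaCoeff_zero, sum_range_succ, range_one,
      sum_singleton, ↓reduceIte, one_ne_zero, pow_zero, pow_one, mul_one]
    linear_combination γ₁ * omegaCoeff α 1 * hinv
  rw [← hasSum_nat_add_iff' 2, hval]
  simp only [gCoeff_add_two]
  exact ((((hasSum_nat_add_iff' 2).2 ht).mul_left _).add
    (((hasSum_nat_add_iff' 1).2 ht).mul_left _)).add (ht.mul_left _)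

theorem stmt5 (α lam h γ₃ : ℝ) (hα1 : 1 < α) (hα2 : α < 2) (hlam : 0 ≤ lam) (hh : 0 < h)
    (γ₁ γ₂ : ℝ) (hγ₁ : γ₁ = α / 2 + γ₃) (hγ₂ : γ₂ = (2 - α) / 2 - 2 * γ₃) :
    HasSum (fun k : ℕ => gCoeff α lam h γ₁ γ₂ γ₃ k) (phiFun α lam h γ₁ γ₂ γ₃) :=
  stmt5_general α lam h γ₃ hα1 hlam hh γ₁ γ₂
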